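/- Let k ≥ 1 be an integer and put d = gcd(12, k). Then Coker ((1_k − X_k)·(1_k + X_k^{3} + X_k^{6} + X_k^{9})) ≅ ℤ ⊕ (ℤ/4ℤ)^{d−1} if d ∈ {1, 3}; ≅ ℤ^{(d+2)/2} ⊕ (ℤ/2ℤ)^{(d−2)/2} if d ∈ {2, 6}; and ≅ ℤ^{(3d+4)/4} if d ∈ {4, 12}. -/

import Mathlib

open Matrix Polynomial

/-- The `m × m` permutation matrix over `ℤ` of the cyclic permutation `(1,2,…,m)`:
its `(i,j)` entry is `1` iff `i ≡ j + 1 (mod m)`. -/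
def cycMat (m : ℕ) : Matrix (Fin m) (Fin m) ℤ :=
  Matrix.of fun i j => if ((j : ℕ) + 1) % m = (i : ℕ) then 1 else 0

/-- `X_m ^ p` for an integer exponent `p`, well defined since `X_m ^ m = 1`. -/
def cycMatZPow (m : ℕ) (p : ℤ) : Matrix (Fin m) (Fin m) ℤ :=
  cycMat m ^ (p % (m : ℤ)).toNat

/-- The cokernel `ℤ^m / A·ℤ^n` of an integer matrix. -/
abbrev coker {m n : Type} [Fintype m] [Fintype n] (A : Matrix m n ℤ) :=
  (m → ℤ) ⧸ LinearMap.range A.mulVecLin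


/-- `s_p(A) = 1 - A + A² - ⋯ + (-1)^(p-1) A^(p-1)` for a square integer matrix `A`. -/
def sMat {n : Type} [Fintype n] [DecidableEq n] (p : ℕ) (A : Matrix n n ℤ) :
    Matrix n n ℤ :=
  ∑ i ∈ Finset.range p, ((-1 : ℤ) ^ i) • A ^ i

/-! Sending `p ∈ ℤ[X]` to `p(X_n) e₀` identifies `ℤ[X] ⧸ (X^n - 1)` with `ℤⁿ`, the variable
acting as `X_n`, so `Coker f(X_n) ≅ ℤ[X] ⧸ (X^n - 1, f)`. As `f = (1 - X)(1 + X³ + X⁶ + X⁹)`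
divides `X¹² - 1`, in any quotient of `ℤ[X]` by an ideal containing `f` we have
`X^k = 1 ↔ X^d = 1` for `d = gcd(12, k)`, so `(X^k - 1, f) = (X^d - 1, f)` and
`Coker f(X_k) ≅ Coker f(X_d)`. For the six divisors `d` of `12` the cokernel is read off from an
explicit Smith normal form of `f(X_d)`. -/

theorem val_finRotate (n : ℕ) (j : Fin n) : (finRotate n j : ℕ) = (j + 1) % n := by
  have := j.neZero
  simp [Fin.val_add]

theorem val_finRotate_pow_apply (n i : ℕ) (j : Fin n) :
    ((finRotate n ^ i) j : ℕ) = (j + i) % n := by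
  induction i with
  | zero => simp [Nat.mod_eq_of_lt j.isLt]
  | succ i ih => rw [pow_succ', Equiv.Perm.mul_apply, val_finRotate, ih, Nat.mod_add_mod, add_assoc]

theorem finRotate_pow_self (n : ℕ) : finRotate n ^ n = 1 := by
  ext j
  rw [val_finRotate_pow_apply, Nat.add_mod_right, Nat.mod_eq_of_lt j.isLt, Equiv.Perm.one_apply]

theorem cycMat_eq_permMatrixHom (n : ℕ) :
    cycMat n = Matrix.permMatrixHom (R := ℤ) (finRotate n) := by
  ext i j
  simp only [cycMat, Matrix.permMatrixHom_apply, PEquiv.toMatrix_apply, Equiv.toPEquiv_apply,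
    Option.mem_def, Option.some_inj, Equiv.Perm.inv_eq_iff_eq, Fin.ext_iff, val_finRotate,
    Matrix.of_apply]
  exact if_congr eq_comm rfl rfl

theorem cycMat_pow_self (n : ℕ) : cycMat n ^ n = 1 := by
  rw [cycMat_eq_permMatrixHom, ← map_pow, finRotate_pow_self, map_one]

theorem cycMat_pow_mulVec_single (n i : ℕ) (j : Fin n) :
    cycMat n ^ i *ᵥ Pi.single j 1 = Pi.single ((finRotate n ^ i) j) 1 := by
  rw [cycMat_eq_permMatrixHom, ← map_pow, Matrix.permMatrixHom_apply, Matrix.permMatrix_mulVec]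
  ext l
  simp only [Function.comp_apply, Pi.single_apply, Equiv.Perm.inv_eq_iff_eq]

section CycEval

variable (n : ℕ) [NeZero n]

noncomputable def cycEval : ℤ[X] →ₗ[ℤ] Fin n → ℤ where
  toFun p := aeval (cycMat n) p *ᵥ Pi.single 0 1
  map_add' p q := by rw [map_add, Matrix.add_mulVec]
  map_smul' c p := by rw [map_smul, Matrix.smul_mulVec, RingHom.id_apply]

variable {n}

theorem cycEval_mul (p q : ℤ[X]) : cycEval n (p * q) = aeval (cycMat n) p *ᵥ cycEval n q := by
  simp only [cycEval, LinearMap.coe_mk, AddHom.coe_mk, map_mul, Matrix.mulVec_mulVec]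

theorem cycEval_X_pow (j : Fin n) : cycEval n (X ^ (j : ℕ)) = Pi.single j 1 := by
  have hj : (finRotate n ^ (j : ℕ)) 0 = j := by
    ext; rw [val_finRotate_pow_apply, Fin.val_zero, zero_add, Nat.mod_eq_of_lt j.isLt]
  simp only [cycEval, LinearMap.coe_mk, AddHom.coe_mk, map_pow, aeval_X, cycMat_pow_mulVec_single,
    hj]

theorem cycEval_surjective : Function.Surjective (cycEval n) := fun v =>
  ⟨∑ j : Fin n, v j • X ^ (j : ℕ), by
    simp only [map_sum, map_smul, cycEval_X_pow]
    exact (pi_eq_sum_univ' v).symm⟩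

theorem cycEval_eq_coeff {p : ℤ[X]} (hp : p.natDegree < n) :
    cycEval n p = fun j : Fin n => p.coeff j := by
  conv_lhs =>
    rw [as_sum_range' p n hp, ← Fin.sum_univ_eq_sum_range (fun i => monomial i (p.coeff i))]
  simp only [← smul_X_eq_monomial, map_sum, map_smul, cycEval_X_pow]
  exact (pi_eq_sum_univ' _).symm

theorem cycEval_X_pow_sub_one_mul (q : ℤ[X]) : cycEval n ((X ^ n - 1) * q) = 0 := by
  rw [cycEval_mul, map_sub, map_pow, aeval_X, map_one, cycMat_pow_self, sub_self,
    Matrix.zero_mulVec]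

theorem ker_cycEval : LinearMap.ker (cycEval n) = (Ideal.span {X ^ n - 1}).restrictScalars ℤ := by
  have hmonic : (X ^ n - 1 : ℤ[X]).Monic := by
    simpa using monic_X_pow_sub_C (1 : ℤ) (NeZero.ne n)
  have hdeg : (X ^ n - 1 : ℤ[X]).natDegree = n := by
    simpa using natDegree_X_pow_sub_C (n := n) (r := (1 : ℤ))
  ext p
  rw [LinearMap.mem_ker, Submodule.restrictScalars_mem, Ideal.mem_span_singleton]
  constructor
  · intro hp
    set r := p %ₘ (X ^ n - 1)
    have hr : r.natDegree < n := hdeg ▸ natDegree_modByMonic_lt p hmonic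
      fun h => NeZero.ne n (by rw [← hdeg, h, natDegree_one])
    have hr0 : cycEval n r = 0 := by
      rw [← hp, ← modByMonic_add_div p (X ^ n - 1), map_add, cycEval_X_pow_sub_one_mul, add_zero]
    rw [← modByMonic_eq_zero_iff_dvd hmonic]
    ext j
    rcases lt_or_ge j n with hj | hj
    · simpa [cycEval_eq_coeff hr] using congrFun hr0 ⟨j, hj⟩
    · exact coeff_eq_zero_of_natDegree_lt (hr.trans_le hj)
  · rintro ⟨q, rfl⟩
    exact cycEval_X_pow_sub_one_mul q

end CycEval

section Coker

variable {n : ℕ} [NeZero n] (f : ℤ[X])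

noncomputable def cycCokerMk : ℤ[X] →ₗ[ℤ] coker (aeval (cycMat n) f) :=
  (LinearMap.range (aeval (cycMat n) f).mulVecLin).mkQ ∘ₗ cycEval n

theorem cycCokerMk_surjective : Function.Surjective (cycCokerMk (n := n) f) :=
  (Submodule.mkQ_surjective _).comp cycEval_surjective

theorem ker_cycCokerMk :
    LinearMap.ker (cycCokerMk (n := n) f) = (Ideal.span {X ^ n - 1, f}).restrictScalars ℤ := by
  ext p
  simp only [cycCokerMk, LinearMap.mem_ker, LinearMap.comp_apply, Submodule.mkQ_apply,
    Submodule.Quotient.mk_eq_zero, LinearMap.mem_range, Matrix.mulVecLin_apply,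
    Submodule.restrictScalars_mem, Ideal.mem_span_pair]
  constructor
  · rintro ⟨w, hw⟩
    obtain ⟨q, rfl⟩ := cycEval_surjective w
    have hpq : p - f * q ∈ LinearMap.ker (cycEval n) := by
      rw [LinearMap.mem_ker, map_sub, cycEval_mul, hw, sub_self]
    rw [ker_cycEval, Submodule.restrictScalars_mem, Ideal.mem_span_singleton] at hpq
    obtain ⟨a, ha⟩ := hpq
    exact ⟨a, q, by linear_combination -ha⟩
  · rintro ⟨a, b, rfl⟩
    refine ⟨cycEval n b, ?_⟩
    rw [map_add, mul_comm a, cycEval_X_pow_sub_one_mul, zero_add, mul_comm, cycEval_mul]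

noncomputable def cokerAevalCycMatEquiv :
    coker (aeval (cycMat n) f) ≃ₗ[ℤ] ℤ[X] ⧸ (Ideal.span {X ^ n - 1, f}).restrictScalars ℤ :=
  (LinearMap.quotKerEquivOfSurjective _ (cycCokerMk_surjective f)).symm.trans
    (Submodule.quotEquivOfEq _ _ (ker_cycCokerMk f))

end Coker

theorem pow_sub_one_mem_iff {R : Type*} [CommRing R] {I : Ideal R} {x : R} {a : ℕ} :
    x ^ a - 1 ∈ I ↔ Ideal.Quotient.mk I x ^ a = 1 := by
  rw [← Ideal.Quotient.eq_zero_iff_mem, map_sub, map_pow, map_one, sub_eq_zero]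

theorem span_X_pow_sub_one_pair_eq_gcd {R : Type*} [CommRing R] {f : R[X]} {m : ℕ}
    (hf : f ∣ X ^ m - 1) (k : ℕ) :
    Ideal.span {X ^ k - 1, f} = Ideal.span {X ^ Nat.gcd m k - 1, f} := by
  apply le_antisymm
  · rw [Ideal.span_le, Set.insert_subset_iff, Set.singleton_subset_iff]
    refine ⟨?_, Ideal.subset_span (by simp)⟩
    obtain ⟨c, hc⟩ := Nat.gcd_dvd_right m k
    rw [SetLike.mem_coe, show X ^ k = (X ^ Nat.gcd m k) ^ c by rw [← pow_mul, ← hc]]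
    exact Ideal.mem_of_dvd _ (sub_one_dvd_pow_sub_one _ c) (Ideal.subset_span (by simp))
  · rw [Ideal.span_le, Set.insert_subset_iff, Set.singleton_subset_iff]
    refine ⟨?_, Ideal.subset_span (by simp)⟩
    have hk : X ^ k - 1 ∈ Ideal.span {X ^ k - 1, f} := Ideal.subset_span (by simp)
    have hm : X ^ m - 1 ∈ Ideal.span {X ^ k - 1, f} :=
      Ideal.mem_of_dvd _ hf (Ideal.subset_span (by simp))
    rw [SetLike.mem_coe, pow_sub_one_mem_iff]
    rw [pow_sub_one_mem_iff] at hk hm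
    exact pow_gcd_eq_one.mpr ⟨hm, hk⟩

noncomputable def cokerAevalCycMatEquivGcd {f : ℤ[X]} {m : ℕ} (hf : f ∣ X ^ m - 1)
    (k : ℕ) [NeZero k] :
    coker (aeval (cycMat k) f) ≃ₗ[ℤ] coker (aeval (cycMat (Nat.gcd m k)) f) :=
  have : NeZero (Nat.gcd m k) := ⟨Nat.gcd_ne_zero_right (NeZero.ne k)⟩
  (cokerAevalCycMatEquiv f).trans <|
    (Submodule.quotEquivOfEq _ _ (by rw [span_X_pow_sub_one_pair_eq_gcd hf])).trans
      (cokerAevalCycMatEquiv f).symm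

section SmithForm

variable {ι : Type} [Fintype ι] [DecidableEq ι]

theorem range_mulVecLin_mul_of_mul_eq_one {R : Type*} [CommRing R] {A V Vi : Matrix ι ι R}
    (hV : V * Vi = 1) :
    LinearMap.range (A * V).mulVecLin = LinearMap.range A.mulVecLin := by
  rw [Matrix.mulVecLin_mul]
  exact LinearMap.range_comp_of_range_eq_top _ <| LinearMap.range_eq_top.mpr fun w =>
    ⟨Vi *ᵥ w, by rw [Matrix.mulVecLin_apply, Matrix.mulVec_mulVec, hV, Matrix.one_mulVec]⟩

noncomputable def cokerEquivOfMulEq {A U Ui V Vi D : Matrix ι ι ℤ} (hU : U * Ui = 1)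
    (hV : V * Vi = 1) (hD : U * A * V = D) : coker A ≃ₗ[ℤ] coker D :=
  Submodule.Quotient.equiv _ _ (Matrix.toLinearEquiv' U (invertibleOfRightInverse U Ui hU)) <| by
    rw [← hD, range_mulVecLin_mul_of_mul_eq_one hV, Matrix.mulVecLin_mul, LinearMap.range_comp]
    rfl

end SmithForm

section DiagonalCoker

variable (a b q : ℕ)

noncomputable def appendZModMap : (Fin (a + b) → ℤ) →ₗ[ℤ] (Fin a → ℤ) × (Fin b → ZMod q) :=
  (LinearMap.funLeft ℤ ℤ (Fin.castAdd b)).prod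
    ((Int.castAddHom (ZMod q)).toIntLinearMap.compLeft (Fin b) ∘ₗ
      LinearMap.funLeft ℤ ℤ (Fin.natAdd a))

theorem appendZModMap_surjective : Function.Surjective (appendZModMap a b q) := by
  rintro ⟨x, y⟩
  refine ⟨Fin.append x fun j => ((y j).cast : ℤ), ?_⟩
  ext <;> simp [appendZModMap]

theorem range_diagonal_append_eq_ker :
    LinearMap.range
        (Matrix.diagonal (Fin.append (0 : Fin a → ℤ) fun _ : Fin b => (q : ℤ))).mulVecLin =
      LinearMap.ker (appendZModMap a b q) := by
  ext v
  simp only [LinearMap.mem_range, LinearMap.mem_ker, Matrix.mulVecLin_apply, Matrix.mulVec_diagonal,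
    appendZModMap, LinearMap.prod_apply, Prod.ext_iff, funext_iff, LinearMap.coe_comp,
    Function.prod_apply, Function.comp_apply, LinearMap.funLeft_apply, Prod.fst_zero, Pi.zero_apply,
    LinearMap.compLeft_apply, AddMonoidHom.coe_toIntLinearMap, Int.coe_castAddHom, Prod.snd_zero,
    ZMod.intCast_zmod_eq_zero_iff_dvd]
  constructor
  · rintro ⟨w, hw⟩
    refine ⟨fun i => ?_, fun j => ?_⟩
    · simpa using (hw (Fin.castAdd b i)).symm
    · exact ⟨w (Fin.natAdd a j), by simpa using (hw (Fin.natAdd a j)).symm⟩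
  · rintro ⟨hleft, hright⟩
    refine ⟨Fin.append 0 fun j => v (Fin.natAdd a j) / q, Fin.addCases (fun i => ?_) (fun j => ?_)⟩
    · simp [hleft]
    · simpa using Int.mul_ediv_cancel' (hright j)

noncomputable def cokerDiagonalAppendEquiv :
    coker (Matrix.diagonal (Fin.append (0 : Fin a → ℤ) fun _ : Fin b => (q : ℤ))) ≃ₗ[ℤ]
      (Fin a → ℤ) × (Fin b → ZMod q) :=
  (Submodule.quotEquivOfEq _ _ (range_diagonal_append_eq_ker a b q)).trans
    (LinearMap.quotKerEquivOfSurjective _ (appendZModMap_surjective a b q))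

end DiagonalCoker

noncomputable def f₁₂ : ℤ[X] := (1 - X) * (1 + X ^ 3 + X ^ 6 + X ^ 9)

theorem f₁₂_dvd_X_pow_twelve_sub_one : f₁₂ ∣ X ^ 12 - 1 :=
  ⟨-(1 + X + X ^ 2), by rw [f₁₂]; ring⟩

theorem aeval_f₁₂ {S : Type*} [Ring S] [Algebra ℤ S] (x : S) :
    aeval x f₁₂ = (1 - x) * (1 + x ^ 3 + x ^ 6 + x ^ 9) := by
  simp [f₁₂]

noncomputable def cokerEquivOfSmithForm {a b q : ℕ}
    {A U Ui V Vi : Matrix (Fin (a + b)) (Fin (a + b)) ℤ}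
    (hU : U * Ui = 1) (hV : V * Vi = 1)
    (hD : U * A * V = Matrix.diagonal (Fin.append (0 : Fin a → ℤ) fun _ : Fin b => (q : ℤ))) :
    coker A ≃ₗ[ℤ] (Fin a → ℤ) × (Fin b → ZMod q) :=
  (cokerEquivOfMulEq hU hV hD).trans (cokerDiagonalAppendEquiv a b q)

/- `U * f₁₂(X_d) * V` is the Smith normal form of `f₁₂(X_d)`, and `Ui`, `Vi` invert `U`, `V`;
for `d ∣ 4` already `f₁₂(X_d) = 0`, so `U = V = 1`. -/

noncomputable def cokerF₁₂Equiv₁ : coker (aeval (cycMat 1) f₁₂) ≃+ ℤ × (Fin 0 → ZMod 4) :=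
  (cokerEquivOfSmithForm (a := 1) (b := 0) (q := 4)
    (mul_one 1) (mul_one 1) (by rw [aeval_f₁₂]; decide)).toAddEquiv.trans
    (AddEquiv.prodCongr (LinearEquiv.funUnique (Fin 1) ℤ ℤ).toAddEquiv (AddEquiv.refl _))

noncomputable def cokerF₁₂Equiv₂ : coker (aeval (cycMat 2) f₁₂) ≃+ (Fin 2 → ℤ) × (Fin 0 → ZMod 2) :=
  (cokerEquivOfSmithForm (a := 2) (b := 0) (q := 2)
    (mul_one 1) (mul_one 1) (by rw [aeval_f₁₂]; decide)).toAddEquiv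

noncomputable def cokerF₁₂Equiv₃ : coker (aeval (cycMat 3) f₁₂) ≃+ ℤ × (Fin 2 → ZMod 4) :=
  (cokerEquivOfSmithForm (a := 1) (b := 2) (q := 4)
    (U := !![1, 1, 1; 1, 0, 0; 1, 1, 0])
    (Ui := !![0, 1, 0; 0, -1, 1; 1, 0, -1])
    (V := !![1, 1, 0; 1, 0, 1; 1, 0, 0])
    (Vi := !![0, 0, 1; 1, 0, -1; 0, 1, -1])
    (by decide) (by decide) (by rw [aeval_f₁₂]; decide)).toAddEquiv.trans
    (AddEquiv.prodCongr (LinearEquiv.funUnique (Fin 1) ℤ ℤ).toAddEquiv (AddEquiv.refl _))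

noncomputable def cokerF₁₂Equiv₄ : coker (aeval (cycMat 4) f₁₂) ≃+ (Fin 4 → ℤ) :=
  (cokerEquivOfSmithForm (a := 4) (b := 0) (q := 1)
    (mul_one 1) (mul_one 1) (by rw [aeval_f₁₂]; decide)).toAddEquiv.trans AddEquiv.prodUnique

noncomputable def cokerF₁₂Equiv₆ : coker (aeval (cycMat 6) f₁₂) ≃+ (Fin 4 → ℤ) × (Fin 2 → ZMod 2) :=
  (cokerEquivOfSmithForm (a := 4) (b := 2) (q := 2)
    (U := !![1, 1, 1, 0, 0, 0;
            -1, 0, 0, 1, 0, 0;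
            0, -1, 0, 0, 1, 0;
            1, 1, 0, 0, 0, 1;
            1, 0, 0, 0, 0, 0;
            1, 1, 0, 0, 0, 0])
    (Ui := !![0, 0, 0, 0, 1, 0;
            0, 0, 0, 0, -1, 1;
            1, 0, 0, 0, 0, -1;
            0, 1, 0, 0, 1, 0;
            0, 0, 1, 0, -1, 1;
            0, 0, 0, 1, 0, -1])
    (V := !![1, -1, 0, 1, 1, 0;
            1, 0, -1, 1, 0, 1;
            1, 0, 0, 0, 0, 0;
            0, 1, 0, 0, 0, 0;
            0, 0, 1, 0, 0, 0;
            0, 0, 0, 1, 0, 0])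
    (Vi := !![0, 0, 1, 0, 0, 0;
            0, 0, 0, 1, 0, 0;
            0, 0, 0, 0, 1, 0;
            0, 0, 0, 0, 0, 1;
            1, 0, -1, 1, 0, -1;
            0, 1, -1, 0, 1, -1])
    (by decide) (by decide) (by rw [aeval_f₁₂]; decide)).toAddEquiv

noncomputable def cokerF₁₂Equiv₁₂ : coker (aeval (cycMat 12) f₁₂) ≃+ (Fin 10 → ℤ) :=
  (cokerEquivOfSmithForm (a := 10) (b := 2) (q := 1)
    (U := !![1, 1, 1, 0, 0, 0, 0, 0, 0, 0, 0, 0;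
            -1, 0, 0, 1, 0, 0, 0, 0, 0, 0, 0, 0;
            0, -1, 0, 0, 1, 0, 0, 0, 0, 0, 0, 0;
            1, 1, 0, 0, 0, 1, 0, 0, 0, 0, 0, 0;
            -1, 0, 0, 0, 0, 0, 1, 0, 0, 0, 0, 0;
            0, -1, 0, 0, 0, 0, 0, 1, 0, 0, 0, 0;
            1, 1, 0, 0, 0, 0, 0, 0, 1, 0, 0, 0;
            -1, 0, 0, 0, 0, 0, 0, 0, 0, 1, 0, 0;
            0, -1, 0, 0, 0, 0, 0, 0, 0, 0, 1, 0;
            1, 1, 0, 0, 0, 0, 0, 0, 0, 0, 0, 1;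
            1, 0, 0, 0, 0, 0, 0, 0, 0, 0, 0, 0;
            1, 1, 0, 0, 0, 0, 0, 0, 0, 0, 0, 0])
    (Ui := !![0, 0, 0, 0, 0, 0, 0, 0, 0, 0, 1, 0;
            0, 0, 0, 0, 0, 0, 0, 0, 0, 0, -1, 1;
            1, 0, 0, 0, 0, 0, 0, 0, 0, 0, 0, -1;
            0, 1, 0, 0, 0, 0, 0, 0, 0, 0, 1, 0;
            0, 0, 1, 0, 0, 0, 0, 0, 0, 0, -1, 1;
            0, 0, 0, 1, 0, 0, 0, 0, 0, 0, 0, -1;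
            0, 0, 0, 0, 1, 0, 0, 0, 0, 0, 1, 0;
            0, 0, 0, 0, 0, 1, 0, 0, 0, 0, -1, 1;
            0, 0, 0, 0, 0, 0, 1, 0, 0, 0, 0, -1;
            0, 0, 0, 0, 0, 0, 0, 1, 0, 0, 1, 0;
            0, 0, 0, 0, 0, 0, 0, 0, 1, 0, -1, 1;
            0, 0, 0, 0, 0, 0, 0, 0, 0, 1, 0, -1])
    (V := !![1, -1, 0, 1, -1, 0, 1, -1, 0, 1, 1, 0;
            1, 0, -1, 1, 0, -1, 1, 0, -1, 1, 0, 1;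
            1, 0, 0, 0, 0, 0, 0, 0, 0, 0, 0, 0;
            0, 1, 0, 0, 0, 0, 0, 0, 0, 0, 0, 0;
            0, 0, 1, 0, 0, 0, 0, 0, 0, 0, 0, 0;
            0, 0, 0, 1, 0, 0, 0, 0, 0, 0, 0, 0;
            0, 0, 0, 0, 1, 0, 0, 0, 0, 0, 0, 0;
            0, 0, 0, 0, 0, 1, 0, 0, 0, 0, 0, 0;
            0, 0, 0, 0, 0, 0, 1, 0, 0, 0, 0, 0;
            0, 0, 0, 0, 0, 0, 0, 1, 0, 0, 0, 0;
            0, 0, 0, 0, 0, 0, 0, 0, 1, 0, 0, 0;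
            0, 0, 0, 0, 0, 0, 0, 0, 0, 1, 0, 0])
    (Vi := !![0, 0, 1, 0, 0, 0, 0, 0, 0, 0, 0, 0;
            0, 0, 0, 1, 0, 0, 0, 0, 0, 0, 0, 0;
            0, 0, 0, 0, 1, 0, 0, 0, 0, 0, 0, 0;
            0, 0, 0, 0, 0, 1, 0, 0, 0, 0, 0, 0;
            0, 0, 0, 0, 0, 0, 1, 0, 0, 0, 0, 0;
            0, 0, 0, 0, 0, 0, 0, 1, 0, 0, 0, 0;
            0, 0, 0, 0, 0, 0, 0, 0, 1, 0, 0, 0;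
            0, 0, 0, 0, 0, 0, 0, 0, 0, 1, 0, 0;
            0, 0, 0, 0, 0, 0, 0, 0, 0, 0, 1, 0;
            0, 0, 0, 0, 0, 0, 0, 0, 0, 0, 0, 1;
            1, 0, -1, 1, 0, -1, 1, 0, -1, 1, 0, -1;
            0, 1, -1, 0, 1, -1, 0, 1, -1, 0, 1, -1])
    (by decide) (by decide) (by rw [aeval_f₁₂]; decide)).toAddEquiv.trans AddEquiv.prodUnique

theorem stmt_15 (k : ℕ) (hk : 1 ≤ k) (d : ℕ) (hd : d = Nat.gcd 12 k) :
    (d = 1 ∨ d = 3 → Nonempty (coker ((1 - cycMat k) * (1 + cycMat k ^ 3 + cycMat k ^ 6 + cycMat k ^ 9)) ≃+ (ℤ × (Fin (d - 1) → ZMod 4)))) ∧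
    (d = 2 ∨ d = 6 → Nonempty (coker ((1 - cycMat k) * (1 + cycMat k ^ 3 + cycMat k ^ 6 + cycMat k ^ 9)) ≃+
      ((Fin ((d + 2) / 2) → ℤ) × (Fin ((d - 2) / 2) → ZMod 2)))) ∧
    (d = 4 ∨ d = 12 → Nonempty (coker ((1 - cycMat k) * (1 + cycMat k ^ 3 + cycMat k ^ 6 + cycMat k ^ 9)) ≃+ (Fin ((3 * d + 4) / 4) → ℤ))) := by
  have : NeZero k := ⟨by omega⟩
  have e := (cokerAevalCycMatEquivGcd f₁₂_dvd_X_pow_twelve_sub_one k).toAddEquiv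
  rw [← hd, aeval_f₁₂ (cycMat k)] at e
  refine ⟨?_, ?_, ?_⟩ <;> rintro (rfl | rfl)
  exacts [⟨e.trans cokerF₁₂Equiv₁⟩, ⟨e.trans cokerF₁₂Equiv₃⟩, ⟨e.trans cokerF₁₂Equiv₂⟩,
    ⟨e.trans cokerF₁₂Equiv₆⟩, ⟨e.trans cokerF₁₂Equiv₄⟩, ⟨e.trans cokerF₁₂Equiv₁₂⟩]
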